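/- The join of two pack-good congruences on (ℕ⁺)* is a pack-good congruence: if ~ and ≈ are pack-good congruences, then the smallest monoid congruence containing both ~ and ≈ (the transitive closure of their union) is a pack-congruence and is compatible with restriction to alphabet intervals. -/

import Mathlib

open scoped Classical

/-- Words over the positive integers. -/
abbrev Word : Type := List ℕ+

/-- Evaluation of a word: number of occurrences of each letter. -/
def ev (w : Word) : ℕ+ → ℕ := fun a => w.count a

/-- A monoid congruence on the free monoid `(ℕ⁺)*`. -/
def IsCongruence (r : Word → Word → Prop) : Prop :=
  Equivalence r ∧ ∀ u v u' v', r u v → r u' v' → r (u ++ u') (v ++ v')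

/-- Restriction of a word to the letters belonging to a set `I`. -/
noncomputable def restrictTo (I : Set ℕ+) (w : Word) : Word :=
  w.filter fun a => decide (a ∈ I)

/-- `I` is an interval (order-convex subset) of `ℕ⁺`. -/
def IsIntervalSet (I : Set ℕ+) : Prop :=
  ∀ ⦃a b c : ℕ+⦄, a ∈ I → c ∈ I → a ≤ b → b ≤ c → b ∈ I

/-- Compatibility with restriction to alphabet intervals. -/
def CompatRestrict (r : Word → Word → Prop) : Prop :=
  ∀ I : Set ℕ+, IsIntervalSet I → ∀ u v, r u v → r (restrictTo I u) (restrictTo I v)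

/-- `r` is a `φ`-congruence. -/
def IsPhiCongruence (φ : Word → Word) (r : Word → Word → Prop) : Prop :=
  ∀ u v, r u v ↔ (r (φ u) (φ v) ∧ ev u = ev v)

/-- Standardization. -/
def std (w : Word) : Word :=
  (List.range w.length).map fun i =>
    ⟨((List.range w.length).countP fun j =>
        decide (w.getD j 1 < w.getD i 1 ∨ (w.getD j 1 = w.getD i 1 ∧ j < i))) + 1,
      Nat.succ_pos _⟩

/-- Packing. -/
def pack (w : Word) : Word :=
  w.map fun a => ⟨(w.dedup.countP fun b => decide (b < a)) + 1, Nat.succ_pos _⟩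

theorem parkBad_ex (w : Word) :
    ∃ d : ℕ, 1 ≤ d ∧ (w.countP fun a : ℕ+ => decide ((a : ℕ) ≤ d)) < d :=
  ⟨w.length + 1, Nat.succ_le_succ (Nat.zero_le _), by
    have h : (w.countP fun a : ℕ+ => decide ((a : ℕ) ≤ w.length + 1)) ≤ w.length :=
      List.countP_le_length
    omega⟩

/-- The smallest `d ≥ 1` such that fewer than `d` letters of `w` are `≤ d`. -/
noncomputable def parkBad (w : Word) : ℕ := Nat.find (parkBad_ex w)

/-- One pass of the parkization procedure, with fuel. -/
noncomputable def parkAux : ℕ → Word → Word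
  | 0, w => w
  | f + 1, w =>
    if parkBad w ≤ w.length then
      parkAux f (w.map fun a : ℕ+ => if parkBad w < (a : ℕ) then (a - 1 : ℕ+) else a)
    else w

/-- Parkization. The fuel `(sum of the letters)` always suffices,
since every pass strictly decreases the sum of the letters. -/
noncomputable def park (w : Word) : Word := parkAux (w.map fun a => (a : ℕ)).sum w

/-- Smallest monoid congruence containing `base`. -/
def CongClosure (base : Word → Word → Prop) (u v : Word) : Prop :=
  ∀ r : Word → Word → Prop, IsCongruence r → (∀ x y, base x y → r x y) → r u v

def sylvBase (x y : Word) : Prop :=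
  ∃ (a b c : ℕ+) (v : Word), a ≤ b ∧ b < c ∧
    x = a :: c :: (v ++ [b]) ∧ y = c :: a :: (v ++ [b])

/-- The sylvester congruence. -/
def sylv : Word → Word → Prop := CongClosure sylvBase

def stalBase (x y : Word) : Prop :=
  ∃ (a b : ℕ+) (v : Word), x = b :: a :: (v ++ [b]) ∧ y = a :: b :: (v ++ [b])

/-- The stalactic congruence. -/
def stal : Word → Word → Prop := CongClosure stalBase

def sylvSharpBase (x y : Word) : Prop :=
  ∃ (a b c : ℕ+) (v : Word), a < b ∧ b ≤ c ∧
    x = b :: (v ++ [a, c]) ∧ y = b :: (v ++ [c, a])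

/-- The #-sylvester congruence. -/
def sylvSharp : Word → Word → Prop := CongClosure sylvSharpBase

/-- The taïga congruence: join of the sylvester and stalactic congruences. -/
def taiga : Word → Word → Prop := CongClosure fun u v => sylv u v ∨ stal u v

/-- Planar binary trees with letter labels. -/
inductive BT : Type where
  | leaf : BT
  | node : BT → ℕ+ → BT → BT
deriving DecidableEq

/-- Binary search tree insertion of a letter. -/
def BT.insert : BT → ℕ+ → BT
  | .leaf, l => .node .leaf l .leaf
  | .node L b R, l => if l ≤ b then .node (L.insert l) b R else .node L b (R.insert l)

/-- Binary search tree of a word: insert the letters from right to left. -/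
def bst (w : Word) : BT := w.foldr (fun l t => t.insert l) .leaf

/-- Planar binary trees labelled by a letter and a multiplicity. -/
inductive BSTM : Type where
  | leaf : BSTM
  | node : BSTM → ℕ+ → ℕ+ → BSTM → BSTM   -- left, letter, multiplicity, right
deriving DecidableEq

/-- Insertion of a letter into a binary search tree with multiplicities. -/
def BSTM.insert : BSTM → ℕ+ → BSTM
  | .leaf, l => .node .leaf l 1 .leaf
  | .node L l' k R, l =>
    if l = l' then .node L l' (k + 1) R
    else if l < l' then .node (L.insert l) l' k R
    else .node L l' k (R.insert l)

/-- The `P`-symbol: insert the letters of `w` from right to left. -/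
def Pmap (w : Word) : BSTM := w.foldr (fun l t => t.insert l) .leaf

/-- Letters of a BSTM in left-to-right (infix) order. -/
def BSTM.letters : BSTM → List ℕ+
  | .leaf => []
  | .node L l _ R => L.letters ++ l :: R.letters

/-- The binary search tree property for a BSTM. -/
def BSTM.IsSearchTree : BSTM → Prop
  | .leaf => True
  | .node L l _ R =>
      (∀ x ∈ L.letters, x < l) ∧ (∀ x ∈ R.letters, l < x) ∧
        L.IsSearchTree ∧ R.IsSearchTree

/-- Total multiplicity of a letter in a BSTM. -/
def BSTM.mult : BSTM → ℕ+ → ℕ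
  | .leaf, _ => 0
  | .node L l k R, a => L.mult a + (if a = l then (k : ℕ) else 0) + R.mult a

/-- Size of a BSTM: sum of the multiplicities. -/
def BSTM.size : BSTM → ℕ
  | .leaf => 0
  | .node L _ k R => L.size + (k : ℕ) + R.size

/-- Planar binary trees with multiplicities. -/
inductive BTM : Type where
  | leaf : BTM
  | node : BTM → ℕ+ → BTM → BTM
deriving DecidableEq

/-- Size of a BTM: sum of the multiplicities. -/
def BTM.size : BTM → ℕ
  | .leaf => 0
  | .node L k R => L.size + (k : ℕ) + R.size

/-- Number of nodes of a BTM. -/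
def BTM.numNodes : BTM → ℕ
  | .leaf => 0
  | .node L _ R => L.numNodes + 1 + R.numNodes

/-- Forgetting the letters of a BSTM gives a BTM. -/
def forgetLetters : BSTM → BTM
  | .leaf => .leaf
  | .node L _ k R => .node (forgetLetters L) k (forgetLetters R)

/-- The `B`-symbol: the BTM underlying `P(w)`. -/
def Bmap (w : Word) : BTM := forgetLetters (Pmap w)

/-- A packed word: its set of letters is `{1, …, k}` for some `k`. -/
def IsPacked (w : Word) : Prop := ∀ a ∈ w, ∀ b : ℕ+, b ≤ a → b ∈ w

/-- Number of packed words inserting to the BTM `T`. -/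
noncomputable def fT (T : BTM) : ℕ :=
  Set.ncard {w : Word | IsPacked w ∧ Bmap w = T}

/-- The hook-type product over the subtrees of a BTM. -/
def hookProd : BTM → ℕ
  | .leaf => 1
  | .node L k R =>
      (BTM.node L k R).size * ((k : ℕ) - 1).factorial * hookProd L * hookProd R

/-- Label the nodes of a BTM in infix order starting from a given letter;
returns the labelled tree and the next unused letter. -/
def infixLabelAux : BTM → ℕ+ → BSTM × ℕ+
  | .leaf, n => (.leaf, n)
  | .node L k R, n =>
    let p := infixLabelAux L n
    let q := infixLabelAux R (p.2 + 1)
    (.node p.1 p.2 k q.1, q.2)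

/-- Label the nodes of a BTM by `1, …, k` in infix order. -/
def infixLabel (T : BTM) : BSTM := (infixLabelAux T 1).1


/-!
Since `r` and `s` are congruences, their join is the reflexive-transitive closure of `r ∪ s`, so
related words are linked by a chain of single `r`- or `s`-steps; each step preserves the evaluation
and packs to a step, which gives one half of the pack-congruence property. Conversely, a
pack-congruence is stable under strictly increasing relabellings `f` of the alphabet, and when
`ev u = ev v` one such `f` sends `pack u` and `pack v` back to `u` and `v`. Restriction to an
interval is a monoid endomorphism of `(ℕ⁺)*` mapping `r` and `s` into themselves, hence it maps
the join into itself.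
-/

open Relation

lemma ev_eq_iff_perm {x y : Word} : ev x = ev y ↔ x.Perm y := by
  rw [List.perm_iff_count]
  exact funext_iff

section CongClosure

variable {base base' : Word → Word → Prop}

lemma CongClosure.of_base {u v : Word} (h : base u v) : CongClosure base u v :=
  fun _ _ hbase => hbase u v h

lemma isCongruence_congClosure (base : Word → Word → Prop) :
    IsCongruence (CongClosure base) :=
  ⟨⟨fun _ _ ht _ => ht.1.refl _,
    fun h t ht hbase => ht.1.symm (h t ht hbase),
    fun h h' t ht hbase => ht.1.trans (h t ht hbase) (h' t ht hbase)⟩,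
   fun _ _ _ _ h h' t ht hbase => ht.2 _ _ _ _ (h t ht hbase) (h' t ht hbase)⟩

lemma CongClosure.of_reflTransGen {u v : Word} (h : ReflTransGen base u v) :
    CongClosure base u v := by
  induction h with
  | refl => exact (isCongruence_congClosure base).1.refl u
  | tail _ hstep ih => exact (isCongruence_congClosure base).1.trans ih (.of_base hstep)

-- The pullback of `CongClosure base'` along the monoid endomorphism `f` is a congruence.
lemma CongClosure.map {f : Word → Word} (hf : ∀ x y, f (x ++ y) = f x ++ f y)
    (hbase : ∀ x y, base x y → base' (f x) (f y)) {u v : Word} (h : CongClosure base u v) :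
    CongClosure base' (f u) (f v) := by
  have hc := isCongruence_congClosure base'
  refine h (fun x y => CongClosure base' (f x) (f y))
    ⟨⟨fun _ => hc.1.refl _, hc.1.symm, hc.1.trans⟩, fun x y x' y' hxy hxy' => ?_⟩
    fun x y hxy => .of_base (hbase x y hxy)
  show CongClosure base' (f (x ++ x')) (f (y ++ y'))
  rw [hf, hf]
  exact hc.2 _ _ _ _ hxy hxy'

lemma CongClosure.ev_eq (hbase : ∀ x y, base x y → ev x = ev y) {u v : Word}
    (h : CongClosure base u v) : ev u = ev v := by
  exact ev_eq_iff_perm.2 (h _ ⟨⟨List.Perm.refl, List.Perm.symm, List.Perm.trans⟩,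
    fun _ _ _ _ => List.Perm.append⟩ fun x y hxy => ev_eq_iff_perm.1 (hbase x y hxy))

end CongClosure

section Join

variable {r s : Word → Word → Prop}

lemma isCongruence_reflTransGen_or (hr : IsCongruence r) (hs : IsCongruence s) :
    IsCongruence (ReflTransGen fun u v => r u v ∨ s u v) := by
  have hsymm : ∀ u v, r u v ∨ s u v → r v u ∨ s v u := fun _ _ =>
    Or.imp hr.1.symm hs.1.symm
  refine ⟨⟨fun _ => .refl, fun h => ?_, .trans⟩, fun u v u' v' h h' => ?_⟩
  · induction h with
    | refl => exact .refl
    | tail _ hstep ih => exact .head (hsymm _ _ hstep) ih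
  · have hleft : ReflTransGen (fun u v => r u v ∨ s u v) (u ++ u') (v ++ u') :=
      ReflTransGen.lift (· ++ u')
        (fun _ _ => Or.imp (hr.2 _ _ _ _ · (hr.1.refl u')) (hs.2 _ _ _ _ · (hs.1.refl u')))
        _ _ h
    have hright : ReflTransGen (fun u v => r u v ∨ s u v) (v ++ u') (v ++ v') :=
      ReflTransGen.lift (v ++ ·)
        (fun _ _ => Or.imp (hr.2 _ _ _ _ (hr.1.refl v)) (hs.2 _ _ _ _ (hs.1.refl v))) _ _ h'
    exact hleft.trans hright

lemma congClosure_or_iff_reflTransGen (hr : IsCongruence r) (hs : IsCongruence s)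
    {u v : Word} :
    CongClosure (fun u v => r u v ∨ s u v) u v ↔ ReflTransGen (fun u v => r u v ∨ s u v) u v :=
  ⟨fun h => h _ (isCongruence_reflTransGen_or hr hs) fun _ _ h => .single h,
    CongClosure.of_reflTransGen⟩

end Join

section Pack

lemma pack_map_of_strictMono {f : ℕ+ → ℕ+} (hf : StrictMono f) (x : Word) :
    pack (x.map f) = pack x := by
  simp only [pack, List.dedup_map_of_injective hf.injective, List.countP_map]
  erw [List.map_map]
  refine List.map_congr_left fun a _ => PNat.eq ?_
  show (x.dedup.countP fun b => decide (f b < f a)) + 1 =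
    (x.dedup.countP fun b => decide (b < a)) + 1
  simp only [hf.lt_iff_lt]

lemma IsPhiCongruence.map_of_strictMono {r : Word → Word → Prop} (hr : IsPhiCongruence pack r)
    {f : ℕ+ → ℕ+} (hf : StrictMono f) {x y : Word} (h : r x y) : r (x.map f) (y.map f) := by
  obtain ⟨hpack, hev⟩ := (hr x y).1 h
  refine (hr _ _).2 ⟨?_, ev_eq_iff_perm.2 ((ev_eq_iff_perm.1 hev).map f)⟩
  rwa [pack_map_of_strictMono hf, pack_map_of_strictMono hf]

lemma countP_dedup_eq_card_filter (w : Word) (q : ℕ+ → Prop) [DecidablePred q] :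
    w.dedup.countP (fun a => decide (q a)) = (w.toFinset.filter q).card := by
  rw [List.countP_eq_length_filter, Finset.card_def, Finset.filter_val, List.toFinset_val,
    Multiset.filter_coe, Multiset.coe_card]

/-- A strictly monotone inverse of packing, common to all words with letter set `S`: it
enumerates `S` in increasing order, followed by the integers above `max S`. -/
lemma exists_strictMono_map_pack (S : Finset ℕ+) :
    ∃ f : ℕ+ → ℕ+, StrictMono f ∧ ∀ w : Word, w.toFinset = S → (pack w).map f = w := by
  set M : ℕ := S.sup (↑)
  set p : ℕ → Prop := fun n => n ∈ S.image (↑) ∨ M < n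
  have hinf : {n | p n}.Infinite := (Set.Ioi_infinite M).mono fun n hn => Or.inr hn
  have hpos : ∀ n, p n → 0 < n := by
    rintro n (hn | hn)
    · obtain ⟨a, -, rfl⟩ := Finset.mem_image.1 hn
      exact a.pos
    · omega
  have hcount : ∀ a ∈ S, (S.filter (· < a)).card = Nat.count p a := by
    intro a ha
    have haM : (a : ℕ) ≤ M := Finset.le_sup (f := PNat.val) ha
    have hfilter : (Finset.range a).filter p = (S.filter (· < a)).image (↑) := by
      ext n
      simp only [Finset.mem_filter, Finset.mem_range, Finset.mem_image, p]
      constructor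
      · rintro ⟨hna, ⟨b, hb, rfl⟩ | hMn⟩
        · exact ⟨b, ⟨hb, hna⟩, rfl⟩
        · omega
      · rintro ⟨b, ⟨hb, hba⟩, rfl⟩
        exact ⟨hba, Or.inl ⟨b, hb, rfl⟩⟩
    rw [Nat.count_eq_card_filter_range, hfilter,
      Finset.card_image_of_injective _ PNat.coe_injective]
  refine ⟨fun j => ⟨Nat.nth p j.natPred, hpos _ (Nat.nth_mem_of_infinite hinf _)⟩,
    fun i j hij => Nat.nth_strictMono hinf (PNat.natPred_lt_natPred.2 hij), fun w hw => ?_⟩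
  conv_rhs => rw [← List.map_id w]
  unfold pack
  erw [List.map_map]
  refine List.map_congr_left fun a ha => PNat.eq ?_
  have haS : a ∈ S := hw ▸ List.mem_toFinset.2 ha
  have hrank : w.dedup.countP (· < a) = Nat.count p a := by
    rw [countP_dedup_eq_card_filter, hw, hcount a haS]
  show Nat.nth p (w.dedup.countP (· < a) + 1 - 1) = a
  rw [Nat.add_sub_cancel, hrank, Nat.nth_count (Or.inl (Finset.mem_image_of_mem _ haS))]

end Pack

lemma congClosure_of_pack {base : Word → Word → Prop}
    (hbase : ∀ f : ℕ+ → ℕ+, StrictMono f → ∀ x y, base x y → base (x.map f) (y.map f))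
    {u v : Word} (hpack : CongClosure base (pack u) (pack v)) (hev : ev u = ev v) :
    CongClosure base u v := by
  obtain ⟨f, hf, hunpack⟩ := exists_strictMono_map_pack u.toFinset
  have hv : v.toFinset = u.toFinset :=
    List.toFinset_eq_of_perm _ _ (ev_eq_iff_perm.1 hev).symm
  rw [← hunpack u rfl, ← hunpack v hv]
  exact hpack.map (fun _ _ => List.map_append) (hbase f hf)

lemma compatRestrict_congClosure {base : Word → Word → Prop} (hbase : CompatRestrict base) :
    CompatRestrict (CongClosure base) :=
  fun I hI _ _ h => h.map (fun _ _ => List.filter_append ..) (hbase I hI)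

theorem join_of_packGood_congruences (r s : Word → Word → Prop)
    (hrc : IsCongruence r) (hrφ : IsPhiCongruence pack r) (hrI : CompatRestrict r)
    (hsc : IsCongruence s) (hsφ : IsPhiCongruence pack s) (hsI : CompatRestrict s) :
    IsCongruence (CongClosure fun u v => r u v ∨ s u v) ∧
      IsPhiCongruence pack (CongClosure fun u v => r u v ∨ s u v) ∧
      CompatRestrict (CongClosure fun u v => r u v ∨ s u v) := by
  have hpack : ∀ x y, r x y ∨ s x y → r (pack x) (pack y) ∨ s (pack x) (pack y) := fun x y =>
    Or.imp (fun h => ((hrφ x y).1 h).1) (fun h => ((hsφ x y).1 h).1)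
  have hev : ∀ x y, r x y ∨ s x y → ev x = ev y := fun x y =>
    Or.rec (fun h => ((hrφ x y).1 h).2) (fun h => ((hsφ x y).1 h).2)
  have hmap : ∀ f : ℕ+ → ℕ+, StrictMono f → ∀ x y,
      r x y ∨ s x y → r (x.map f) (y.map f) ∨ s (x.map f) (y.map f) := fun _ hf _ _ =>
    Or.imp (hrφ.map_of_strictMono hf) (hsφ.map_of_strictMono hf)
  refine ⟨isCongruence_congClosure _, fun u v => ⟨fun h => ⟨?_, h.ev_eq hev⟩,
    fun ⟨hp, he⟩ => congClosure_of_pack hmap hp he⟩, compatRestrict_congClosure ?_⟩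
  · -- `pack` is not a monoid morphism, so it is transported along a chain of elementary steps.
    exact .of_reflTransGen (((congClosure_or_iff_reflTransGen hrc hsc).1 h).lift pack hpack)
  · exact fun I hI x y => Or.imp (hrI I hI x y) (hsI I hI x y)
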